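/- Let S : (ℂ²)⁴ → (ℂ²)⁴ be given by S(x₁,x₂,y₁,y₂,z₁,z₂,t₁,t₂) = (x₁y₁/(x₁y₁ + z₁ − x₁z₁), t₁x₂y₂/(y₂ + t₁x₂ − x₂), x₁y₁ + z₁ − x₁z₁, y₂, z₁, t₂, (y₂ + t₁x₂ − x₂)/y₂, z₂) and write its components as (u₁,u₂,v₁,v₂,w₁,w₂,r₁,r₂). Then: (i) I₁ = z₁, I₂ = x₁y₁, I₃ = t₂z₂ and I₄ = t₂ + z₂ are invariants of S, i.e. w₁ = z₁, u₁v₁ = x₁y₁, w₂r₂ = t₂z₂ and w₂ + r₂ = t₂ + z₂ at every point where all denominators are nonzero; (ii) S is noninvolutive: the second component of S∘S equals t₁²x₂y₂/((t₁² − 1)x₂ + y₂), so there exists a point p with all denominators of S and S∘S nonzero such that S(S(p)) ≠ p. -/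

import Mathlib

noncomputable section

namespace Paper4Simplex

variable {X : Type*}

/-- Quadruples over `X`. -/
abbrev Q (X : Type*) : Type _ := X × X × X × X

/-- 10-tuples over `X`. -/
abbrev P (X : Type*) : Type _ := X × X × X × X × X × X × X × X × X × X

/-- `S` acting on coordinates 1,2,3,4 of a 10-tuple. -/
def app1234 (S : Q X → Q X) : P X → P X := fun p =>
  match p with
  | (a,b,c,d,e,f,g,h,i,j) =>
    match S (a,b,c,d) with
    | (A,B,C,D) => (A,B,C,D,e,f,g,h,i,j)

/-- `S` acting on coordinates 1,5,6,7 of a 10-tuple. -/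
def app1567 (S : Q X → Q X) : P X → P X := fun p =>
  match p with
  | (a,b,c,d,e,f,g,h,i,j) =>
    match S (a,e,f,g) with
    | (A,E,F,G) => (A,b,c,d,E,F,G,h,i,j)

/-- `S` acting on coordinates 2,5,8,9 of a 10-tuple. -/
def app2589 (S : Q X → Q X) : P X → P X := fun p =>
  match p with
  | (a,b,c,d,e,f,g,h,i,j) =>
    match S (b,e,h,i) with
    | (B,E,H,I) => (a,B,c,d,E,f,g,H,I,j)

/-- `S` acting on coordinates 3,6,8,10 of a 10-tuple. -/
def app368X (S : Q X → Q X) : P X → P X := fun p =>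
  match p with
  | (a,b,c,d,e,f,g,h,i,j) =>
    match S (c,f,h,j) with
    | (C,F,H,J) => (a,b,C,d,e,F,g,H,i,J)

/-- `S` acting on coordinates 4,7,9,10 of a 10-tuple. -/
def app479X (S : Q X → Q X) : P X → P X := fun p =>
  match p with
  | (a,b,c,d,e,f,g,h,i,j) =>
    match S (d,g,i,j) with
    | (D,G,I,J) => (a,b,c,D,e,f,G,h,I,J)

def proj1234 : P X → Q X := fun p => match p with
  | (a,b,c,d,_,_,_,_,_,_) => (a,b,c,d)

def proj1567 : P X → Q X := fun p => match p with
  | (a,_,_,_,e,f,g,_,_,_) => (a,e,f,g)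

def proj2589 : P X → Q X := fun p => match p with
  | (_,b,_,_,e,_,_,h,i,_) => (b,e,h,i)

def proj368X : P X → Q X := fun p => match p with
  | (_,_,c,_,_,f,_,h,_,j) => (c,f,h,j)

def proj479X : P X → Q X := fun p => match p with
  | (_,_,_,d,_,_,g,_,i,j) => (d,g,i,j)

/-- Left-hand side of the 4-simplex equation. -/
def lhs (S : Q X → Q X) : P X → P X :=
  app1234 S ∘ app1567 S ∘ app2589 S ∘ app368X S ∘ app479X S

/-- Right-hand side of the 4-simplex equation. -/
def rhs (S : Q X → Q X) : P X → P X :=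
  app479X S ∘ app368X S ∘ app2589 S ∘ app1567 S ∘ app1234 S

/-- All denominators occurring on the left-hand side composition are nonzero:
`D` holds at each quadruple to which `S` is applied. -/
def lhsDom (D : Q X → Prop) (S : Q X → Q X) (p : P X) : Prop :=
  D (proj479X p) ∧
  D (proj368X (app479X S p)) ∧
  D (proj2589 (app368X S (app479X S p))) ∧
  D (proj1567 (app2589 S (app368X S (app479X S p)))) ∧
  D (proj1234 (app1567 S (app2589 S (app368X S (app479X S p)))))

/-- All denominators occurring on the right-hand side composition are nonzero. -/
def rhsDom (D : Q X → Prop) (S : Q X → Q X) (p : P X) : Prop :=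
  D (proj1234 p) ∧
  D (proj1567 (app1234 S p)) ∧
  D (proj2589 (app1567 S (app1234 S p))) ∧
  D (proj368X (app2589 S (app1567 S (app1234 S p)))) ∧
  D (proj479X (app368X S (app2589 S (app1567 S (app1234 S p)))))


/-! Case c of the Kashaev–Korepanov–Sergeev type 4-simplex maps. -/

abbrev C2 : Type := ℂ × ℂ

/-- The 4-simplex map of case c. -/
def Sc : Q C2 → Q C2 := fun q =>
  match q with
  | ((x1,x2),(y1,y2),(z1,z2),(t1,t2)) =>
    ((x1*y1/(x1*y1 + z1 - x1*z1), t1*x2*y2/(y2 + t1*x2 - x2)),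
     (x1*y1 + z1 - x1*z1, y2),
     (z1, t2),
     ((y2 + t1*x2 - x2)/y2, z2))

/-- Nonvanishing of the denominators of `Sc`. -/
def DomC : Q C2 → Prop := fun q =>
  match q with
  | ((x1,x2),(y1,y2),(z1,_),(t1,_)) =>
    x1*y1 + z1 - x1*z1 ≠ 0 ∧ y2 + t1*x2 - x2 ≠ 0 ∧ y2 ≠ 0

/-! `S` keeps `z₁`, swaps `z₂` and `t₂`, and `v₁` is the denominator of `u₁`, which gives the
invariants at once. Applying `S` twice shifts `y₁` by `(x₁ - 1)(y₁ - z₁)(x₁y₁ + z₁)/v₁`, so `S ∘ S`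
moves every admissible point off that surface. -/

theorem Sc_Sc_snd_fst_fst_sub (x1 x2 y1 y2 z1 z2 t1 t2 : ℂ)
    (hv : x1*y1 + z1 - x1*z1 ≠ 0) :
    (Sc (Sc ((x1,x2),(y1,y2),(z1,z2),(t1,t2)))).2.1.1 - y1 =
      (x1 - 1) * (y1 - z1) * (x1*y1 + z1) / (x1*y1 + z1 - x1*z1) := by
  simp only [Sc]
  field_simp
  ring

/-- For the case-c map S, writing
S(x₁,x₂,y₁,y₂,z₁,z₂,t₁,t₂) = (u₁,u₂,v₁,v₂,w₁,w₂,r₁,r₂):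
(i) I₁ = z₁, I₂ = x₁y₁, I₃ = t₂z₂ and I₄ = t₂+z₂ are invariants, i.e. w₁ = z₁,
u₁v₁ = x₁y₁, w₂r₂ = t₂z₂ and w₂+r₂ = t₂+z₂ at every point where all denominators
are nonzero; (ii) S is noninvolutive: there exists a point p, with all denominators
of S and S∘S nonzero, such that S(S(p)) ≠ p. -/
theorem Sc_invariants_and_noninvolutive :
    (∀ x1 x2 y1 y2 z1 z2 t1 t2 : ℂ,
      DomC ((x1,x2),(y1,y2),(z1,z2),(t1,t2)) →
      match Sc ((x1,x2),(y1,y2),(z1,z2),(t1,t2)) with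
      | ((u1,_),(v1,_),(w1,w2),(_,r2)) =>
        w1 = z1 ∧ u1*v1 = x1*y1 ∧ w2*r2 = t2*z2 ∧ w2 + r2 = t2 + z2) ∧
    (∃ p : Q C2, DomC p ∧ DomC (Sc p) ∧ Sc (Sc p) ≠ p) := by
  constructor
  · rintro x1 x2 y1 y2 z1 z2 t1 t2 ⟨hv, -, -⟩
    exact ⟨rfl, div_mul_cancel₀ _ hv, rfl, rfl⟩
  · refine ⟨((2,0),(1,1),(3,0),(0,0)), by norm_num [DomC], by norm_num [DomC, Sc], fun h => ?_⟩
    have hsub := Sc_Sc_snd_fst_fst_sub 2 0 1 1 3 0 0 0 (by norm_num)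
    rw [h] at hsub
    norm_num at hsub

end Paper4Simplex
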